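/- With notation as above, extend by defining $y_n := \sum_{i=1}^{p+1} (-1)^{i-1} x_i y_{n-i}$ for integers $n \ge p+2$. Then $\Phi(y_n) \in \mathbb{Z}_p[t_1,\dots,t_{p+1}]$ for all $n \ge 1$, and for all $n \ge p+2$ the mod-$p$ reductions satisfy $\overline{\Phi(y_n)} = \overline{t_p}\,\overline{\Phi(y_{n-p})} + \overline{t_{p+1}}\,\overline{\Phi(y_{n-p-1})}$. -/

import Mathlib

open MvPolynomial

/-- The algebra map `Φ` sending `y_i ↦ p t_i` for `i ≤ p` and `y_{p+1} ↦ t_{p+1}`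
(variables indexed by `ℕ`, variable `i` standing for `y_i` resp. `t_i`). -/
noncomputable def Phi (p : ℕ) : MvPolynomial ℕ ℚ →ₐ[ℚ] MvPolynomial ℕ ℚ :=
  MvPolynomial.aeval fun i =>
    if i ≤ p then (p : MvPolynomial ℕ ℚ) * MvPolynomial.X i else MvPolynomial.X i

/-- All coefficients are `p`-integral. -/
def CoeffsPIntegral (p : ℕ) (f : MvPolynomial ℕ ℚ) : Prop :=
  ∀ m : ℕ →₀ ℕ, MvPolynomial.coeff m f = 0 ∨ 0 ≤ padicValRat p (MvPolynomial.coeff m f)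

/-- All coefficients are divisible by `p` (i.e. the reduction mod `p` vanishes). -/
def CoeffsDivP (p : ℕ) (f : MvPolynomial ℕ ℚ) : Prop :=
  ∀ m : ℕ →₀ ℕ, MvPolynomial.coeff m f = 0 ∨ 1 ≤ padicValRat p (MvPolynomial.coeff m f)

/-!
Under `Φ` every `y_i` with `i ≤ p` acquires a factor `p`, so we work in `ℤ_(p)[t] ⊆ ℚ[t]`.
Newton's recursion `n x_n = ∑ ± x_{n-i} y_i` then gives `Φ(x_n) ≡ 0 (mod p)` for `1 ≤ n < p`,
since `n` is a `p`-adic unit. For `n = p` the factor `p` cancels the `1/p` and only `x_0 y_p`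
survives mod `p`; for `n = p + 1` only `x_0 y_{p+1}` survives and `p + 1 ≡ 1`. Thus
`Φ(x_p) ≡ ±t_p`, `Φ(x_{p+1}) ≡ ∓t_{p+1}`, and in the recursion of `y_n` all but the last two
terms vanish mod `p`, the signs squaring away.
-/

section

variable {p : ℕ} [Fact p.Prime]

lemma Rat.padicValuation_of_ne_zero {c : ℚ} (hc : c ≠ 0) :
    Rat.padicValuation p c = WithZero.exp (-padicValRat p c) :=
  if_neg hc

lemma padicValuation_inv_natCast_le_one {n : ℕ} (hn : ¬ p ∣ n) :
    Rat.padicValuation p (n : ℚ)⁻¹ ≤ 1 := by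
  rw [Rat.padicValuation_le_one_iff,
    Rat.inv_natCast_den_of_pos (Nat.pos_of_ne_zero (by rintro rfl; exact hn (dvd_zero p)))]
  exact hn

end

lemma natCast_mul_eq_smul {σ : Type*} (n : ℕ) (f : MvPolynomial σ ℚ) :
    (n : MvPolynomial σ ℚ) * f = (n : ℚ) • f := by
  rw [← nsmul_eq_mul, Nat.cast_smul_eq_nsmul]

section PIntegral

variable {p : ℕ} [Fact p.Prime] {σ : Type*}

variable (p σ) in
noncomputable def pIntegralPolys : Subring (MvPolynomial σ ℚ) :=
  (map (Rat.padicValuation p).integer.subtype).range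

lemma X_mem_pIntegralPolys (i : σ) : X i ∈ pIntegralPolys p σ := ⟨X i, map_X _ _⟩

lemma C_mem_pIntegralPolys {c : ℚ} (hc : Rat.padicValuation p c ≤ 1) :
    C c ∈ pIntegralPolys p σ :=
  ⟨C ⟨c, hc⟩, map_C _ _⟩

lemma padicValuation_coeff_le_one {f : MvPolynomial σ ℚ} (hf : f ∈ pIntegralPolys p σ)
    (m : σ →₀ ℕ) : Rat.padicValuation p (coeff m f) ≤ 1 := by
  obtain ⟨g, rfl⟩ := hf
  rw [coeff_map]
  exact (coeff m g).2

lemma smul_mem_pIntegralPolys {c : ℚ} {f : MvPolynomial σ ℚ}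
    (hc : Rat.padicValuation p c ≤ 1) (hf : f ∈ pIntegralPolys p σ) :
    c • f ∈ pIntegralPolys p σ := by
  rw [smul_eq_C_mul]
  exact mul_mem (C_mem_pIntegralPolys hc) hf

lemma coeffsPIntegral_of_mem {f : MvPolynomial ℕ ℚ} (hf : f ∈ pIntegralPolys p ℕ) :
    CoeffsPIntegral p f := by
  refine fun m => or_iff_not_imp_left.2 fun h0 => ?_
  have h := padicValuation_coeff_le_one hf m
  rw [Rat.padicValuation_of_ne_zero h0, ← WithZero.exp_zero, WithZero.exp_le_exp] at h
  linarith

variable (p) in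
def IsPDivisible (f : MvPolynomial σ ℚ) : Prop :=
  C (p : ℚ)⁻¹ * f ∈ pIntegralPolys p σ

lemma coeffsDivP_of_isPDivisible {f : MvPolynomial ℕ ℚ} (hf : IsPDivisible p f) :
    CoeffsDivP p f := by
  refine fun m => or_iff_not_imp_left.2 fun h0 => ?_
  have hp : (p : ℚ) ≠ 0 := by exact_mod_cast (Fact.out : p.Prime).ne_zero
  have h := padicValuation_coeff_le_one hf m
  rw [coeff_C_mul, Rat.padicValuation_of_ne_zero (mul_ne_zero (inv_ne_zero hp) h0),
    padicValRat.mul (inv_ne_zero hp) h0, padicValRat.inv,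
    padicValRat.self (Fact.out : p.Prime).one_lt, ← WithZero.exp_zero, WithZero.exp_le_exp] at h
  linarith

namespace IsPDivisible

variable {f g : MvPolynomial σ ℚ}

lemma mem (hf : IsPDivisible p f) : f ∈ pIntegralPolys p σ := by
  have hp : (p : ℚ) ≠ 0 := by exact_mod_cast (Fact.out : p.Prime).ne_zero
  have hf' : (p : MvPolynomial σ ℚ) * (C (p : ℚ)⁻¹ * f) = f := by
    rw [natCast_mul_eq_smul, ← smul_eq_C_mul, smul_inv_smul₀ hp]
  exact hf' ▸ mul_mem (natCast_mem _ p) hf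

lemma add (hf : IsPDivisible p f) (hg : IsPDivisible p g) : IsPDivisible p (f + g) := by
  unfold IsPDivisible; rw [mul_add]; exact add_mem hf hg

lemma sub (hf : IsPDivisible p f) (hg : IsPDivisible p g) : IsPDivisible p (f - g) := by
  unfold IsPDivisible; rw [mul_sub]; exact sub_mem hf hg

lemma mul_of_mem (hf : IsPDivisible p f) (hg : g ∈ pIntegralPolys p σ) :
    IsPDivisible p (f * g) := by
  unfold IsPDivisible; rw [← mul_assoc]; exact mul_mem hf hg

lemma mem_mul (hf : f ∈ pIntegralPolys p σ) (hg : IsPDivisible p g) :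
    IsPDivisible p (f * g) :=
  mul_comm g f ▸ hg.mul_of_mem hf

lemma smul {c : ℚ} (hc : Rat.padicValuation p c ≤ 1) (hf : IsPDivisible p f) :
    IsPDivisible p (c • f) := by
  rw [smul_eq_C_mul]; exact mem_mul (C_mem_pIntegralPolys hc) hf

end IsPDivisible

lemma isPDivisible_sum {ι : Type*} {s : Finset ι} {f : ι → MvPolynomial σ ℚ}
    (hf : ∀ i ∈ s, IsPDivisible p (f i)) : IsPDivisible p (∑ i ∈ s, f i) := by
  unfold IsPDivisible; rw [Finset.mul_sum]; exact sum_mem hf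

lemma isPDivisible_natCast_mul {f : MvPolynomial σ ℚ} (hf : f ∈ pIntegralPolys p σ) :
    IsPDivisible p ((p : MvPolynomial σ ℚ) * f) := by
  have hp : (p : ℚ) ≠ 0 := by exact_mod_cast (Fact.out : p.Prime).ne_zero
  unfold IsPDivisible
  rwa [natCast_mul_eq_smul, ← smul_eq_C_mul, inv_smul_smul₀ hp]

lemma mem_of_isPDivisible_sub {f g : MvPolynomial σ ℚ} (hfg : IsPDivisible p (f - g))
    (hg : g ∈ pIntegralPolys p σ) : f ∈ pIntegralPolys p σ :=
  sub_add_cancel f g ▸ add_mem hfg.mem hg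

end PIntegral

lemma Phi_X (p i : ℕ) :
    Phi p (X i) = if i ≤ p then (p : MvPolynomial ℕ ℚ) * X i else X i := by
  simp [Phi]

def NewtonSeqUpTo (N : ℕ) (x : ℕ → MvPolynomial ℕ ℚ) : Prop :=
  x 0 = 1 ∧ ∀ n, 1 ≤ n → n ≤ N →
    x n = (n : ℚ)⁻¹ • ∑ i ∈ Finset.range n,
      (-1 : MvPolynomial ℕ ℚ) ^ i * x (n - (i + 1)) * X (i + 1)

lemma NewtonSeqUpTo.Phi_eq {N : ℕ} {x : ℕ → MvPolynomial ℕ ℚ} (hx : NewtonSeqUpTo N x)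
    (p : ℕ) {n : ℕ} (h1 : 1 ≤ n) (h2 : n ≤ N) :
    Phi p (x n) = (n : ℚ)⁻¹ • ∑ i ∈ Finset.range n,
      (-1 : MvPolynomial ℕ ℚ) ^ i * Phi p (x (n - (i + 1))) * Phi p (X (i + 1)) := by
  simp only [hx.2 n h1 h2, map_smul, map_sum, map_mul, map_pow, map_neg, map_one]

section

variable {p : ℕ} [Fact p.Prime]

lemma Phi_X_mem (i : ℕ) : Phi p (X i) ∈ pIntegralPolys p ℕ := by
  rw [Phi_X]
  split_ifs
  · exact mul_mem (natCast_mem _ p) (X_mem_pIntegralPolys i)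
  · exact X_mem_pIntegralPolys i

lemma isPDivisible_Phi_X {i : ℕ} (hi : i ≤ p) : IsPDivisible p (Phi p (X i)) := by
  rw [Phi_X, if_pos hi]
  exact isPDivisible_natCast_mul (X_mem_pIntegralPolys i)

lemma neg_one_pow_mem_pIntegralPolys (i : ℕ) :
    (-1 : MvPolynomial ℕ ℚ) ^ i ∈ pIntegralPolys p ℕ :=
  pow_mem (neg_mem (one_mem _)) i

namespace NewtonSeqUpTo

variable {x : ℕ → MvPolynomial ℕ ℚ} (hx : NewtonSeqUpTo (p + 1) x)
include hx

lemma isPDivisible_Phi_of_lt {n : ℕ} (h1 : 1 ≤ n) (hn : n < p) :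
    IsPDivisible p (Phi p (x n)) := by
  induction n using Nat.strong_induction_on with
  | _ n ih =>
  have hmem : ∀ k < n, Phi p (x k) ∈ pIntegralPolys p ℕ := by
    rintro (_ | k) hk
    · rw [hx.1, map_one]; exact one_mem _
    · exact (ih (k + 1) hk (by omega) (by omega)).mem
  rw [hx.Phi_eq p h1 (by omega)]
  refine .smul (padicValuation_inv_natCast_le_one fun h => ?_) (isPDivisible_sum fun i hi => ?_)
  · exact absurd (Nat.le_of_dvd h1 h) (by omega)
  · rw [Finset.mem_range] at hi
    exact .mem_mul (mul_mem (neg_one_pow_mem_pIntegralPolys i) (hmem _ (by omega)))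
      (isPDivisible_Phi_X (by omega))

lemma Phi_mem_of_lt {n : ℕ} (hn : n < p) : Phi p (x n) ∈ pIntegralPolys p ℕ := by
  rcases Nat.eq_zero_or_pos n with rfl | h1
  · rw [hx.1, map_one]; exact one_mem _
  · exact (hx.isPDivisible_Phi_of_lt h1 hn).mem

lemma isPDivisible_Phi_self_sub : IsPDivisible p (Phi p (x p) - (-1) ^ (p - 1) * X p) := by
  have hp : (p : ℚ) ≠ 0 := by exact_mod_cast (Fact.out : p.Prime).ne_zero
  obtain ⟨q, rfl⟩ : ∃ q, p = q + 1 := ⟨p - 1, by have := (Fact.out : p.Prime).pos; omega⟩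
  have hsum : Phi (q + 1) (x (q + 1)) = ∑ i ∈ Finset.range (q + 1),
      (-1 : MvPolynomial ℕ ℚ) ^ i * Phi (q + 1) (x (q + 1 - (i + 1))) * X (i + 1) := by
    rw [hx.Phi_eq _ (by omega) (by omega), ← inv_smul_smul₀ hp (∑ i ∈ _, _ * X (i + 1)),
      ← natCast_mul_eq_smul, Finset.mul_sum]
    refine congrArg _ (Finset.sum_congr rfl fun i hi => ?_)
    rw [Finset.mem_range] at hi
    rw [Phi_X, if_pos (by omega)]
    ring
  rw [hsum, Finset.sum_range_succ, Nat.sub_self, hx.1, map_one, mul_one, Nat.add_sub_cancel,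
    add_sub_cancel_right]
  refine isPDivisible_sum fun i hi => ?_
  rw [Finset.mem_range] at hi
  exact (IsPDivisible.mem_mul (neg_one_pow_mem_pIntegralPolys i)
    (hx.isPDivisible_Phi_of_lt (by omega) (by omega))).mul_of_mem (X_mem_pIntegralPolys _)

lemma Phi_mem_of_le {n : ℕ} (hn : n ≤ p) : Phi p (x n) ∈ pIntegralPolys p ℕ := by
  rcases hn.lt_or_eq with hn | rfl
  · exact hx.Phi_mem_of_lt hn
  · exact mem_of_isPDivisible_sub hx.isPDivisible_Phi_self_sub
      (mul_mem (neg_one_pow_mem_pIntegralPolys _) (X_mem_pIntegralPolys _))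

lemma isPDivisible_Phi_succ_sub :
    IsPDivisible p (Phi p (x (p + 1)) - (-1) ^ p * X (p + 1)) := by
  set S := ∑ i ∈ Finset.range p,
    (-1 : MvPolynomial ℕ ℚ) ^ i * Phi p (x (p + 1 - (i + 1))) * Phi p (X (i + 1))
  have hS : IsPDivisible p S := isPDivisible_sum fun i hi => by
    rw [Finset.mem_range] at hi
    exact .mem_mul (mul_mem (neg_one_pow_mem_pIntegralPolys i) (hx.Phi_mem_of_le (by omega)))
      (isPDivisible_Phi_X (by omega))
  have hrec : Phi p (x (p + 1)) = ((p + 1 : ℕ) : ℚ)⁻¹ • (S + (-1) ^ p * X (p + 1)) := by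
    rw [hx.Phi_eq p (by omega) le_rfl, Finset.sum_range_succ, Nat.sub_self, hx.1, map_one,
      mul_one, Phi_X, if_neg (by omega)]
  have hunit : Rat.padicValuation p ((p + 1 : ℕ) : ℚ)⁻¹ ≤ 1 :=
    padicValuation_inv_natCast_le_one fun h => (Fact.out : p.Prime).one_lt.ne'
      (Nat.dvd_one.mp ((Nat.dvd_add_right dvd_rfl).mp h))
  have hmem : Phi p (x (p + 1)) ∈ pIntegralPolys p ℕ := hrec ▸ smul_mem_pIntegralPolys hunit
    (add_mem hS.mem (mul_mem (neg_one_pow_mem_pIntegralPolys p) (X_mem_pIntegralPolys _)))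
  have hmul :
      ((p + 1 : ℕ) : MvPolynomial ℕ ℚ) * Phi p (x (p + 1)) = S + (-1) ^ p * X (p + 1) := by
    rw [hrec, natCast_mul_eq_smul, smul_inv_smul₀ (by positivity)]
  have hsub : Phi p (x (p + 1)) - (-1) ^ p * X (p + 1) =
      S - (p : MvPolynomial ℕ ℚ) * Phi p (x (p + 1)) := by
    push_cast at hmul
    linear_combination hmul
  rw [hsub]
  exact hS.sub (isPDivisible_natCast_mul hmem)

lemma Phi_mem {n : ℕ} (hn : n ≤ p + 1) : Phi p (x n) ∈ pIntegralPolys p ℕ := by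
  rcases hn.lt_or_eq with hn | rfl
  · exact hx.Phi_mem_of_le (by omega)
  · exact mem_of_isPDivisible_sub hx.isPDivisible_Phi_succ_sub
      (mul_mem (neg_one_pow_mem_pIntegralPolys _) (X_mem_pIntegralPolys _))

end NewtonSeqUpTo

variable {x y : ℕ → MvPolynomial ℕ ℚ} (hx : NewtonSeqUpTo (p + 1) x)
  (hy1 : ∀ n, 1 ≤ n → n ≤ p + 1 → y n = X n)
  (hyrec : ∀ n, p + 2 ≤ n →
    y n = ∑ i ∈ Finset.range (p + 1),
      (-1 : MvPolynomial ℕ ℚ) ^ i * x (i + 1) * y (n - (i + 1)))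
include hx hy1 hyrec

lemma Phi_y_mem {n : ℕ} (hn : 1 ≤ n) : Phi p (y n) ∈ pIntegralPolys p ℕ := by
  induction n using Nat.strong_induction_on with
  | _ n ih =>
  rcases le_or_gt n (p + 1) with h | h
  · rw [hy1 n hn h]
    exact Phi_X_mem n
  · rw [hyrec n h, map_sum]
    refine sum_mem fun i hi => ?_
    rw [Finset.mem_range] at hi
    simp only [map_mul, map_pow, map_neg, map_one]
    exact mul_mem (mul_mem (neg_one_pow_mem_pIntegralPolys i) (hx.Phi_mem (by omega)))
      (ih _ (by omega) (by omega))

lemma isPDivisible_Phi_y_sub {n : ℕ} (hn : p + 2 ≤ n) :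
    IsPDivisible p (Phi p (y n) -
      (X p * Phi p (y (n - p)) + X (p + 1) * Phi p (y (n - p - 1)))) := by
  obtain ⟨q, rfl⟩ : ∃ q, p = q + 1 := ⟨p - 1, by have := (Fact.out : p.Prime).pos; omega⟩
  have hxp := hx.isPDivisible_Phi_self_sub
  have hxp1 := hx.isPDivisible_Phi_succ_sub
  rw [Nat.add_sub_cancel] at hxp
  rw [hyrec n hn, map_sum, Finset.sum_range_succ, Finset.sum_range_succ,
    show n - (q + 1) - 1 = n - (q + 1 + 1) by omega]
  simp only [map_mul, map_pow, map_neg, map_one]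
  set s : MvPolynomial ℕ ℚ := (-1) ^ q
  set t : MvPolynomial ℕ ℚ := (-1) ^ (q + 1)
  have hs : s * s = 1 := by rw [← mul_pow]; simp
  have ht : t * t = 1 := by rw [← mul_pow]; simp
  have hy : ∀ k, 1 ≤ k → Phi (q + 1) (y k) ∈ pIntegralPolys (q + 1) ℕ :=
    fun k hk => Phi_y_mem hx hy1 hyrec hk
  have regroup : ∀ R A B Y₁ Y₂ : MvPolynomial ℕ ℚ,
      R + s * A * Y₁ + t * B * Y₂ - (X (q + 1) * Y₁ + X (q + 1 + 1) * Y₂) =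
        R + s * (A - s * X (q + 1)) * Y₁ + t * (B - t * X (q + 1 + 1)) * Y₂ :=
    fun R A B Y₁ Y₂ => by
      linear_combination (X (q + 1) * Y₁) * hs + (X (q + 1 + 1) * Y₂) * ht
  rw [regroup]
  refine ((isPDivisible_sum fun i hi => ?_).add ?_).add ?_
  · rw [Finset.mem_range] at hi
    exact (IsPDivisible.mem_mul (neg_one_pow_mem_pIntegralPolys i)
      (hx.isPDivisible_Phi_of_lt (by omega) (by omega))).mul_of_mem (hy _ (by omega))
  · exact (IsPDivisible.mem_mul (neg_one_pow_mem_pIntegralPolys q) hxp).mul_of_mem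
      (hy _ (by omega))
  · exact (IsPDivisible.mem_mul (neg_one_pow_mem_pIntegralPolys _) hxp1).mul_of_mem
      (hy _ (by omega))

end

/-- With `x_n` given by Newton's recursion, `y_n = X n` for `1 ≤ n ≤ p+1`, and
`y_n := ∑_{i=1}^{p+1} (-1)^{i-1} x_i y_{n-i}` for `n ≥ p+2`: every `Φ(y_n)` is
`p`-integral, and mod `p` one has
`Φ(y_n) ≡ t_p Φ(y_{n-p}) + t_{p+1} Φ(y_{n-p-1})` for `n ≥ p+2`. -/
theorem phi_y_integrality_and_recurrence (p : ℕ) (hp : p.Prime)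
    (x : ℕ → MvPolynomial ℕ ℚ)
    (hx0 : x 0 = 1)
    (hxr : ∀ n, 1 ≤ n → n ≤ p + 1 →
      x n = (n : ℚ)⁻¹ • ∑ i ∈ Finset.range n,
        (-1 : MvPolynomial ℕ ℚ) ^ i * x (n - (i + 1)) * MvPolynomial.X (i + 1))
    (y : ℕ → MvPolynomial ℕ ℚ)
    (hy1 : ∀ n, 1 ≤ n → n ≤ p + 1 → y n = MvPolynomial.X n)
    (hyrec : ∀ n, p + 2 ≤ n →
      y n = ∑ i ∈ Finset.range (p + 1),
        (-1 : MvPolynomial ℕ ℚ) ^ i * x (i + 1) * y (n - (i + 1))) :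
    (∀ n, 1 ≤ n → CoeffsPIntegral p (Phi p (y n))) ∧
    (∀ n, p + 2 ≤ n →
      CoeffsDivP p (Phi p (y n) -
        (MvPolynomial.X p * Phi p (y (n - p)) +
          MvPolynomial.X (p + 1) * Phi p (y (n - p - 1))))) := by
  have : Fact p.Prime := ⟨hp⟩
  have hx : NewtonSeqUpTo (p + 1) x := ⟨hx0, hxr⟩
  exact ⟨fun n hn => coeffsPIntegral_of_mem (Phi_y_mem hx hy1 hyrec hn),
    fun n hn => coeffsDivP_of_isPDivisible (isPDivisible_Phi_y_sub hx hy1 hyrec hn)⟩
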